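/- Suppose A and B are bounded linear operators on ℓ²(ℕ) with ⟨e_j, A e_k⟩ = δ_{jk} − [u_{−1/2,−1}]_{j+k+1} and ⟨e_j, B e_k⟩ = δ_{jk} + [u_{1/2,−1}]_{j+k+1} for all j,k ≥ 0, i.e. A = I − H(u_{−1/2,−1}) and B = I + H(u_{1/2,−1}). Then A and B are invertible (bijective with bounded inverse) on ℓ²(ℕ). -/

import Mathlib

/-!
The Fourier coefficients of `u_{β,−1}` are `sin (π (β − n)) / (π (β − n))`: integrate over
`(−π, π]`, where `u_{β,−1}(e^{iθ}) = e^{iβθ}`. For `β = ∓1/2` both operators therefore have the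
form `I + T` with `⟨e_j, T e_k⟩ = (−1)^{j+k} / (π (j + k + c))`, `c = 3/2` resp. `1/2`. Up to the
diagonal unitary `e_j ↦ (−1)^j e_j` and the factor `1/π`, `T` is the Hilbert-type matrix
`1 / (j + k + c) = ∫₀¹ t^{c−1} t^j t^k dt`, a Gram matrix and hence positive semidefinite.
So `‖v‖² ≤ Re ⟪v, A v⟫`, and such a coercive operator on a Hilbert space is invertible.
-/

open Filter MeasureTheory
open scoped InnerProductSpace

noncomputable section

/-- ℓ²(ℕ) over ℂ. -/
abbrev l2 : Type := lp (fun _ : ℕ => ℂ) 2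

/-- The `k`-th Fourier coefficient of a function on the unit circle, given as a
`2π`-periodic function of the angle: `a_k = (1/(2π)) ∫_0^{2π} f(θ) e^{-ikθ} dθ`. -/
def fc (f : ℝ → ℂ) (k : ℤ) : ℂ :=
  ((1 / (2 * Real.pi) : ℝ) : ℂ) *
    ∫ θ in (0:ℝ)..(2 * Real.pi), f θ * Complex.exp (-(Complex.I * k * θ))

/-- The standard orthonormal basis vector `e_j` of ℓ²(ℕ). -/
def ee (j : ℕ) : l2 := lp.single 2 j 1

/-- Matrix entry `⟨e_j, A e_k⟩` of an operator on ℓ²(ℕ). -/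
def ent (A : l2 →L[ℂ] l2) (j k : ℕ) : ℂ := ⟪ee j, A (ee k)⟫_ℂ

/-- The function `u_{β,−1}` on the circle: `u_{β,−1}(e^{iθ}) = exp(iβθ)` for
`−π < θ < π`; written as `exp(β · Log(e^{iθ}))`. -/
def um1 (β : ℂ) (θ : ℝ) : ℂ := Complex.exp (β * Complex.log (Complex.exp (Complex.I * θ)))

open scoped ComplexConjugate Real
open Finset

section FourierCoefficient

open Complex

lemma um1_mul_exp_periodic (β : ℂ) (n : ℤ) :
    Function.Periodic (fun θ : ℝ => um1 β θ * exp (-(I * n * θ))) (2 * π) := by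
  intro θ
  have h1 : I * ((θ + 2 * π : ℝ) : ℂ) = I * θ + 2 * π * I := by push_cast; ring
  have h2 : -(I * n * ((θ + 2 * π : ℝ) : ℂ)) = -(I * n * θ) + (-n : ℤ) * (2 * π * I) := by
    push_cast; ring
  simp only [um1, h1, h2, exp_add, exp_two_pi_mul_I, exp_int_mul_two_pi_mul_I, mul_one]

lemma um1_eq_exp {β : ℂ} {θ : ℝ} (hθ : θ ∈ Set.Ioc (-π) π) :
    um1 β θ = exp (β * I * θ) := by
  rw [um1, log_exp, mul_assoc] <;> simp [hθ.1, hθ.2]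

lemma fc_um1 (β : ℂ) (n : ℤ) (h : β ≠ n) :
    fc (um1 β) n = sin (π * (β - n)) / (π * (β - n)) := by
  have hc : (β - n) * I ≠ 0 := mul_ne_zero (sub_ne_zero.mpr h) I_ne_zero
  have hint : ∫ θ in (-π)..π, um1 β θ * exp (-(I * n * θ)) =
      ∫ θ in (-π)..π, exp ((β - n) * I * θ) := by
    refine intervalIntegral.integral_congr_ae (Eventually.of_forall fun θ hθ => ?_)
    rw [Set.uIoc_of_le (by linarith [Real.pi_pos])] at hθ
    rw [um1_eq_exp hθ, ← exp_add]
    ring_nf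
  have hper := (um1_mul_exp_periodic β n).intervalIntegral_add_eq 0 (-π)
  rw [zero_add, show -π + 2 * π = π by ring] at hper
  rw [fc, hper, hint, integral_exp_mul_complex hc, sin]
  push_cast
  field_simp
  rw [I_sq]
  ring

lemma fc_um1_ofReal_natCast_add_one (β : ℝ) (m : ℕ) (h : β ≠ m + 1) :
    fc (um1 β) ((m : ℤ) + 1) = Real.sin (π * β) * (-1) ^ m / (π * (m + 1 - β)) := by
  have hβ : (β : ℂ) ≠ ((m + 1 : ℤ) : ℂ) := by exact_mod_cast h
  have harg : π * (β - ((m + 1 : ℤ) : ℂ)) = ((π * β - ((m + 1 : ℕ) : ℝ) * π : ℝ) : ℂ) := by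
    push_cast; ring
  rw [fc_um1 _ _ hβ, harg, ← ofReal_sin, Real.sin_sub_nat_mul_pi, pow_succ]
  push_cast
  rw [show (π : ℂ) * β - (m + 1) * π = -(π * (m + 1 - β)) by ring, div_neg]
  ring

lemma fc_um1_neg_half (j k : ℕ) :
    fc (um1 (-(1 / 2))) ((j : ℤ) + k + 1) =
      -((-1) ^ (j + k) / (π * (j + k + (3 / 2 : ℝ)))) := by
  have hjk : (0 : ℝ) ≤ ((j + k : ℕ) : ℝ) := Nat.cast_nonneg _
  have := fc_um1_ofReal_natCast_add_one (-(1 / 2)) (j + k) (by linarith)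
  rw [show π * (-(1 / 2) : ℝ) = -(π / 2) by ring, Real.sin_neg, Real.sin_pi_div_two] at this
  push_cast at this ⊢
  rw [this]
  ring_nf

lemma fc_um1_half (j k : ℕ) :
    fc (um1 (1 / 2)) ((j : ℤ) + k + 1) = (-1) ^ (j + k) / (π * (j + k + (1 / 2 : ℝ))) := by
  have hjk : (0 : ℝ) ≤ ((j + k : ℕ) : ℝ) := Nat.cast_nonneg _
  have := fc_um1_ofReal_natCast_add_one (1 / 2) (j + k) (by linarith)
  rw [show π * (1 / 2 : ℝ) = π / 2 by ring, Real.sin_pi_div_two] at this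
  push_cast at this ⊢
  rw [this]
  ring_nf

end FourierCoefficient

lemma integral_rpow_mul_pow {c : ℝ} (hc : 0 < c) (n : ℕ) :
    ∫ t in (0 : ℝ)..1, t ^ (c - 1) * t ^ n = 1 / (n + c) := by
  have hr : -1 < (n : ℝ) + c - 1 := by linarith [(Nat.cast_nonneg n : (0 : ℝ) ≤ n)]
  rw [intervalIntegral.integral_congr_ae (g := fun t : ℝ => t ^ ((n : ℝ) + c - 1))
    (Eventually.of_forall fun t ht => ?_), integral_rpow (Or.inl hr)]
  · simp [show (n : ℝ) + c - 1 + 1 = n + c by ring, (by positivity : (n : ℝ) + c ≠ 0)]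
  · rw [Set.uIoc_of_le zero_le_one] at ht
    rw [← Real.rpow_natCast, ← Real.rpow_add ht.1]
    ring_nf

lemma intervalIntegrable_rpow_mul_pow {c : ℝ} (hc : 0 < c) (n : ℕ) :
    IntervalIntegrable (fun t : ℝ => t ^ (c - 1) * t ^ n) volume 0 1 :=
  (intervalIntegral.intervalIntegrable_rpow' (by linarith)).mul_continuousOn
    (continuous_pow n).continuousOn

lemma sum_conj_mul_div_add_eq_integral {c : ℝ} (hc : 0 < c) (s : Finset ℕ) (y : ℕ → ℂ) :
    ∑ j ∈ s, ∑ k ∈ s, conj (y j) * y k / (j + k + c) =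
      ∫ t in (0 : ℝ)..1, ((t ^ (c - 1) * ‖∑ j ∈ s, y j * t ^ j‖ ^ 2 : ℝ) : ℂ) := by
  have hpt : ∀ t : ℝ, ((t ^ (c - 1) * ‖∑ j ∈ s, y j * t ^ j‖ ^ 2 : ℝ) : ℂ) =
      ∑ j ∈ s, ∑ k ∈ s, conj (y j) * y k * ((t ^ (c - 1) * t ^ (j + k) : ℝ) : ℂ) := by
    intro t
    push_cast
    rw [← Complex.conj_mul', map_sum, sum_mul_sum]
    simp only [mul_sum]
    refine sum_congr rfl fun j _ => sum_congr rfl fun k _ => ?_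
    simp only [map_mul, map_pow, Complex.conj_ofReal]
    ring
  have hint : ∀ j k : ℕ, IntervalIntegrable
      (fun t : ℝ => conj (y j) * y k * ((t ^ (c - 1) * t ^ (j + k) : ℝ) : ℂ)) volume 0 1 :=
    fun j k => let h := intervalIntegrable_rpow_mul_pow hc (j + k)
      IntervalIntegrable.const_mul ⟨h.1.ofReal (𝕜 := ℂ), h.2.ofReal (𝕜 := ℂ)⟩ _
  simp_rw [hpt]
  rw [intervalIntegral.integral_finsetSum fun j _ => by
    simpa only [Finset.sum_fn] using IntervalIntegrable.sum s fun k _ => hint j k]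
  refine sum_congr rfl fun j _ => ?_
  rw [intervalIntegral.integral_finsetSum fun k _ => hint j k]
  refine sum_congr rfl fun k _ => ?_
  rw [intervalIntegral.integral_const_mul, intervalIntegral.integral_ofReal,
    integral_rpow_mul_pow hc]
  push_cast
  ring

lemma re_sum_conj_mul_div_add_nonneg {c : ℝ} (hc : 0 < c) (s : Finset ℕ) (y : ℕ → ℂ) :
    0 ≤ (∑ j ∈ s, ∑ k ∈ s, conj (y j) * y k / (j + k + c)).re := by
  rw [sum_conj_mul_div_add_eq_integral hc, intervalIntegral.integral_ofReal, Complex.ofReal_re]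
  exact intervalIntegral.integral_nonneg zero_le_one fun t ht =>
    mul_nonneg (Real.rpow_nonneg ht.1 _) (sq_nonneg _)

lemma isUnit_of_re_inner_sub_one_nonneg {𝕜 E : Type*} [RCLike 𝕜] [NormedAddCommGroup E]
    [InnerProductSpace 𝕜 E] [CompleteSpace E] (A : E →L[𝕜] E)
    (h : ∀ v, 0 ≤ RCLike.re ⟪v, (A - 1) v⟫_𝕜) : IsUnit A :=
  A.isUnit_of_forall_le_norm_inner_map one_pos fun v => calc
    ‖v‖ ^ 2 * (1 : NNReal) = RCLike.re ⟪v, v⟫_𝕜 := by simp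
    _ ≤ RCLike.re ⟪v, v⟫_𝕜 + RCLike.re ⟪v, (A - 1) v⟫_𝕜 := le_add_of_nonneg_right (h v)
    _ = RCLike.re ⟪v, A v⟫_𝕜 := by
      rw [← map_add, ← inner_add_right, sub_apply, one_apply_eq_self, add_sub_cancel]
    _ ≤ ‖⟪A v, v⟫_𝕜‖ := (RCLike.re_le_norm _).trans (norm_inner_symm _ _).le

lemma inner_ee_ee (j k : ℕ) : ⟪ee j, ee k⟫_ℂ = if j = k then 1 else 0 := by
  simp [ee, lp.inner_single_left, Pi.single_apply]

lemma ent_sub_one (A : l2 →L[ℂ] l2) (j k : ℕ) :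
    ent (A - 1) j k = ent A j k - if j = k then 1 else 0 := by
  rw [ent, ent, sub_apply, inner_sub_right, one_apply_eq_self, inner_ee_ee]

lemma inner_sum_smul_ee_map (T : l2 →L[ℂ] l2) (s : Finset ℕ) (x : ℕ → ℂ) :
    ⟪∑ j ∈ s, x j • ee j, T (∑ k ∈ s, x k • ee k)⟫_ℂ =
      ∑ j ∈ s, ∑ k ∈ s, conj (x j) * x k * ent T j k := by
  rw [map_sum, sum_inner]
  refine sum_congr rfl fun j _ => ?_
  rw [inner_sum]
  refine sum_congr rfl fun k _ => ?_
  rw [map_smul, inner_smul_left, inner_smul_right, ent, mul_assoc]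

lemma re_inner_map_self_nonneg_of_ent (T : l2 →L[ℂ] l2)
    (h : ∀ (s : Finset ℕ) (x : ℕ → ℂ),
      0 ≤ (∑ j ∈ s, ∑ k ∈ s, conj (x j) * x k * ent T j k).re)
    (v : l2) : 0 ≤ (⟪v, T v⟫_ℂ).re := by
  have hv : HasSum (fun j => v j • ee j) v := by
    simpa only [ee, ← lp.single_smul, smul_eq_mul, mul_one] using
      lp.hasSum_single ENNReal.ofNat_ne_top v
  have hclosed : IsClosed {w : l2 | 0 ≤ (⟪w, T w⟫_ℂ).re} :=
    isClosed_le continuous_const (Complex.continuous_re.comp (continuous_id.inner T.continuous))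
  refine hclosed.mem_of_tendsto hv (Eventually.of_forall fun s => ?_)
  rw [Set.mem_ofPred_eq, inner_sum_smul_ee_map]
  exact h s v

lemma isUnit_of_ent_eq_one_add_hilbert {c : ℝ} (hc : 0 < c) (A : l2 →L[ℂ] l2)
    (h : ∀ j k : ℕ, ent A j k = (if j = k then 1 else 0) + (-1) ^ (j + k) / (π * (j + k + c))) :
    IsUnit A := by
  refine isUnit_of_re_inner_sub_one_nonneg A (re_inner_map_self_nonneg_of_ent _ fun s x => ?_)
  have hsign : ∑ j ∈ s, ∑ k ∈ s, conj (x j) * x k * ent (A - 1) j k =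
      (1 / π : ℝ) * ∑ j ∈ s, ∑ k ∈ s,
        conj ((-1) ^ j * x j) * ((-1) ^ k * x k) / (j + k + c) := by
    simp only [mul_sum]
    refine sum_congr rfl fun j _ => sum_congr rfl fun k _ => ?_
    rw [ent_sub_one, h, add_sub_cancel_left, map_mul, map_pow, map_neg, map_one]
    push_cast
    field_simp
    ring
  rw [hsign, Complex.re_ofReal_mul]
  exact mul_nonneg (by positivity) (re_sum_conj_mul_div_add_nonneg hc s _)

/-- If `A = I − H(u_{−1/2,−1})` and `B = I + H(u_{1/2,−1})` on ℓ²(ℕ), then `A` and `B`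
are invertible (bijective with bounded inverse). -/
theorem stmt2 (A B : l2 →L[ℂ] l2)
    (hA : ∀ j k : ℕ, ent A j k =
      (if j = k then 1 else 0) - fc (um1 (-(1/2))) ((j : ℤ) + k + 1))
    (hB : ∀ j k : ℕ, ent B j k =
      (if j = k then 1 else 0) + fc (um1 (1/2)) ((j : ℤ) + k + 1)) :
    (∃ A' : l2 →L[ℂ] l2, A ∘L A' = 1 ∧ A' ∘L A = 1) ∧
    (∃ B' : l2 →L[ℂ] l2, B ∘L B' = 1 ∧ B' ∘L B = 1) := by
  refine ⟨isUnit_iff_exists.mp (isUnit_of_ent_eq_one_add_hilbert (c := 3 / 2) (by norm_num) A ?_),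
    isUnit_iff_exists.mp (isUnit_of_ent_eq_one_add_hilbert (c := 1 / 2) (by norm_num) B ?_)⟩
  · intro j k
    rw [hA, fc_um1_neg_half, sub_neg_eq_add]
  · intro j k
    rw [hB, fc_um1_half]

end
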